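/- Let φ ∈ S(ℝⁿ) be a real-valued Schwartz function. Then there exist nonnegative Schwartz functions φ₁, φ₂ ∈ S(ℝⁿ) (i.e. φ₁(x) ≥ 0 and φ₂(x) ≥ 0 for all x) such that φ = φ₁ − φ₂. Moreover φ₁ can be chosen with φ₁(x) ≥ |φ(x)| for all x ∈ ℝⁿ. -/

import Mathlib

open Metric Filter Finset Function
open scoped Topology ContDiff

noncomputable section Stmt11Aux

namespace Stmt11

/-- A fixed bump function on `ℝ`: equals 1 on `[-2,2]`, vanishes outside `(-3,3)`. -/
def bmp : ContDiffBump (0:ℝ) := ⟨2, 3, by norm_num, by norm_num⟩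

lemma bmp_zero {s : ℝ} (hs : 3 ≤ |s|) : bmp s = 0 :=
  bmp.zero_of_le_dist (by rw [Real.dist_eq, sub_zero]; exact hs)

lemma bmp_bound (m : ℕ) : ∃ B : ℝ, 0 ≤ B ∧ ∀ s, ‖iteratedDeriv m (⇑bmp) s‖ ≤ B := by
  obtain ⟨B, hB⟩ :=
    ((bmp.contDiff (n := ⊤)).continuous_iteratedFDeriv (mod_cast le_top)).bounded_above_of_compact_support
      (bmp.hasCompactSupport.iteratedFDeriv m)
  refine ⟨max B 0, le_max_right _ _, fun s => ?_⟩
  rw [← norm_iteratedFDeriv_eq_norm_iteratedDeriv]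
  exact (hB s).trans (le_max_left _ _)

variable (A : ℕ → ℝ)

/-- The `j`-th term of the series defining the 1-dimensional majorant. -/
def trm (j : ℕ) : ℝ → ℝ := fun s => A j * bmp (s - j)

lemma trm_contDiff (j : ℕ) : ContDiff ℝ ∞ (trm A j) :=
  contDiff_const.mul (bmp.contDiff.comp (contDiff_id.sub contDiff_const))

lemma trm_zero {j : ℕ} {s : ℝ} (h : 3 ≤ |s - j|) : trm A j s = 0 := by
  simp [trm, bmp_zero h]

/-- Index cutoff for local finiteness. -/
def K (t : ℝ) : ℕ := ⌈max t 0⌉₊ + 4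

lemma trm_zero_of_K {j : ℕ} {s t : ℝ} (hs : |s - t| < 1) (hj : K t ≤ j) :
    trm A j s = 0 := by
  apply trm_zero
  have h1 : t ≤ (⌈max t 0⌉₊ : ℝ) := le_trans (le_max_left _ _) (Nat.le_ceil _)
  have h2 : (K t : ℝ) ≤ j := by exact_mod_cast hj
  have h3 : (K t : ℝ) = ⌈max t 0⌉₊ + 4 := by simp [K]
  rw [abs_sub_comm, le_abs]
  left
  have := abs_lt.1 hs
  linarith

/-- The 1-dimensional majorant function. -/
def ηf : ℝ → ℝ := fun t => ∑' j : ℕ, trm A j t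

lemma summable_trm (t : ℝ) : Summable (fun j => trm A j t) := by
  apply summable_of_ne_finset_zero (s := Finset.range (K t))
  intro j hj
  exact trm_zero_of_K A (by rw [sub_self, abs_zero]; norm_num) (le_of_not_gt (by simpa using hj))

lemma ηf_eventually_eq (t : ℝ) :
    ηf A =ᶠ[𝓝 t] fun s => ∑ j ∈ Finset.range (K t), trm A j s := by
  filter_upwards [Metric.ball_mem_nhds t one_pos] with s hs
  have hs' : |s - t| < 1 := by simpa [Real.dist_eq] using hs
  exact tsum_eq_sum fun j hj => trm_zero_of_K A hs' (le_of_not_gt (by simpa using hj))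

lemma ηf_contDiff : ContDiff ℝ ∞ (ηf A) := by
  rw [contDiff_iff_contDiffAt]
  intro t
  exact (ContDiff.sum fun j _ => trm_contDiff A j).contDiffAt.congr_of_eventuallyEq
    (ηf_eventually_eq A t)

lemma iFD_congr {f g : ℝ → ℝ} {x : ℝ} (h : f =ᶠ[𝓝 x] g) (m : ℕ) :
    iteratedFDeriv ℝ m f x = iteratedFDeriv ℝ m g x := by
  rw [← iteratedFDerivWithin_univ, ← iteratedFDerivWithin_univ]
  exact Filter.EventuallyEq.iteratedFDerivWithin_eq
    (by simpa [nhdsWithin_univ] using h) h.eq_of_nhds m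

lemma iFD_ηf (m : ℕ) (t : ℝ) :
    iteratedFDeriv ℝ m (ηf A) t
      = ∑ j ∈ Finset.range (K t), iteratedFDeriv ℝ m (trm A j) t := by
  rw [iFD_congr (ηf_eventually_eq A t) m,
    iteratedFDeriv_sum fun j _ => (trm_contDiff A j).of_le (mod_cast le_top)]
  simp

lemma norm_iFD_trm (j m : ℕ) (t : ℝ) :
    ‖iteratedFDeriv ℝ m (trm A j) t‖ = |A j| * ‖iteratedDeriv m (⇑bmp) (t - j)‖ := by
  have hsm : ContDiff ℝ m (fun s : ℝ => bmp (s - j)) :=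
    (bmp.contDiff.comp (contDiff_id.sub contDiff_const)).of_le (mod_cast le_top)
  have h1 : iteratedFDeriv ℝ m (trm A j) t
      = A j • iteratedFDeriv ℝ m (fun s : ℝ => bmp (s - j)) t := by
    have h := iteratedFDeriv_const_smul_apply' (a := A j) (x := t) hsm.contDiffAt
    have he : trm A j = fun s : ℝ => A j • bmp (s - j) := by
      funext s; simp [trm, smul_eq_mul]
    rw [he]
    exact h
  have h2 : iteratedDeriv m (fun s : ℝ => bmp (s - j))
      = fun x => iteratedDeriv m (⇑bmp) (x - j) := by
    simpa [sub_eq_add_neg] using iteratedDeriv_comp_add_const m (⇑bmp) (-(j:ℝ))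
  rw [h1]
  rw [norm_smul (A j) (iteratedFDeriv ℝ m (fun s : ℝ => bmp (s - (j:ℝ))) t),
    norm_iteratedFDeriv_eq_norm_iteratedDeriv, h2]
  simp [Real.norm_eq_abs]

lemma trm_iFD_zero {j m : ℕ} {t : ℝ} (h : (j:ℝ) ≤ t - 4) :
    iteratedFDeriv ℝ m (trm A j) t = 0 := by
  have hev : trm A j =ᶠ[𝓝 t] fun _ => (0:ℝ) := by
    filter_upwards [Metric.ball_mem_nhds t one_pos] with s hs
    have hs' : |s - t| < 1 := by simpa [Real.dist_eq] using hs
    apply trm_zero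
    rw [le_abs]
    left
    have := abs_lt.1 hs'
    linarith
  rw [iFD_congr hev m, iteratedFDeriv_zero_fun]
  rfl

variable {A}

lemma ηf_iFD_bound (hA0 : ∀ j, 0 ≤ A j) (hAanti : Antitone A) (m : ℕ) {B : ℝ}
    (hB : ∀ s, ‖iteratedDeriv m (⇑bmp) s‖ ≤ B) (t : ℝ) :
    ‖iteratedFDeriv ℝ m (ηf A) t‖ ≤ 9 * (A ⌈max (t-4) 0⌉₊ * B) := by
  classical
  have hB0 : 0 ≤ B := le_trans (norm_nonneg _) (hB 0)
  rw [iFD_ηf]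
  refine le_trans (norm_sum_le _ _) ?_
  set J := ⌈max (t-4) 0⌉₊ with hJ
  set G := (Finset.range (K t)).filter (fun j : ℕ => (t - 4 : ℝ) < (j:ℝ)) with hG
  have hsum : ∑ j ∈ Finset.range (K t), ‖iteratedFDeriv ℝ m (trm A j) t‖
      = ∑ j ∈ G, ‖iteratedFDeriv ℝ m (trm A j) t‖ := by
    refine (Finset.sum_subset (Finset.filter_subset _ _) ?_).symm
    intro j hj hjG
    have hle : (j:ℝ) ≤ t - 4 := by
      by_contra hlt
      exact hjG (Finset.mem_filter.2 ⟨hj, lt_of_not_ge hlt⟩)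
    rw [trm_iFD_zero A hle]
    simp
  rw [hsum]
  have hterm : ∀ j ∈ G, ‖iteratedFDeriv ℝ m (trm A j) t‖ ≤ A J * B := by
    intro j hj
    obtain ⟨_, hj2⟩ := Finset.mem_filter.1 hj
    rw [norm_iFD_trm, abs_of_nonneg (hA0 j)]
    have hjA : A j ≤ A J :=
      hAanti (Nat.ceil_le.2 (max_le hj2.le (Nat.cast_nonneg j)))
    exact mul_le_mul hjA (hB _) (norm_nonneg _) (hA0 _)
  refine le_trans (Finset.sum_le_sum hterm) ?_
  rw [Finset.sum_const, nsmul_eq_mul]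
  have hcard : G.card ≤ 9 := by
    have hsub : G ⊆ Finset.Icc J (J + 8) := by
      intro j hj
      obtain ⟨hj1, hj2⟩ := Finset.mem_filter.1 hj
      rw [Finset.mem_Icc]
      constructor
      · exact Nat.ceil_le.2 (max_le hj2.le (Nat.cast_nonneg j))
      · have h1 : j < ⌈max t 0⌉₊ + 4 := by simpa [K] using Finset.mem_range.1 hj1
        have h2 : ⌈max t 0⌉₊ ≤ J + 4 := by
          apply Nat.ceil_le.2
          have h3 : (max (t-4) 0 : ℝ) ≤ J := Nat.le_ceil _
          have h4 : t - 4 ≤ (J:ℝ) := le_trans (le_max_left _ _) h3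
          push_cast
          apply max_le <;> linarith
        omega
    exact le_trans (Finset.card_le_card hsub) (by rw [Nat.card_Icc]; omega)
  have h9 : (G.card : ℝ) ≤ 9 := by exact_mod_cast hcard
  exact mul_le_mul_of_nonneg_right h9 (mul_nonneg (hA0 _) hB0)

lemma ηf_zero_of_lt {t : ℝ} (ht : t < -3) (m : ℕ) :
    iteratedFDeriv ℝ m (ηf A) t = 0 := by
  have hev : ηf A =ᶠ[𝓝 t] fun _ => (0:ℝ) := by
    filter_upwards [Metric.ball_mem_nhds t (by linarith : (0:ℝ) < -3 - t)] with s hs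
    have hs' : |s - t| < -3 - t := by simpa [Real.dist_eq] using hs
    have hsneg : s < -3 := by
      have := abs_lt.1 hs'
      linarith
    have : ∀ j : ℕ, trm A j s = 0 := by
      intro j
      apply trm_zero
      rw [abs_sub_comm, le_abs]
      left
      have : (0:ℝ) ≤ j := Nat.cast_nonneg j
      linarith
    simp [ηf, this]
  rw [iFD_congr hev m, iteratedFDeriv_zero_fun]
  rfl

lemma ηf_decay (hA0 : ∀ j, 0 ≤ A j) (hAanti : Antitone A)
    (hAdec : ∀ k : ℕ, ∃ C : ℝ, 0 ≤ C ∧ ∀ j : ℕ, 1 ≤ j → A j ≤ C / (j:ℝ)^k)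
    (k m : ℕ) :
    ∃ C : ℝ, ∀ t, |t|^k * ‖iteratedFDeriv ℝ m (ηf A) t‖ ≤ C := by
  obtain ⟨B, hB0, hB⟩ := bmp_bound m
  obtain ⟨Ck, hCk0, hCk⟩ := hAdec k
  refine ⟨9 * B * (9^k * A 0 + 2^k * Ck), fun t => ?_⟩
  have htarget0 : (0:ℝ) ≤ 9 * B * (9^k * A 0 + 2^k * Ck) :=
    mul_nonneg (mul_nonneg (by norm_num) hB0)
      (add_nonneg (mul_nonneg (by positivity) (hA0 0)) (mul_nonneg (by positivity) hCk0))
  rcases lt_or_ge t (-3) with ht | ht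
  · rw [ηf_zero_of_lt ht m]
    simpa using htarget0
  have hmain := ηf_iFD_bound hA0 hAanti m hB t
  rcases le_or_gt t 9 with ht9 | ht9
  · have h1 : |t| ≤ 9 := abs_le.2 ⟨by linarith, ht9⟩
    have hAJ : A ⌈max (t-4) 0⌉₊ ≤ A 0 := hAanti (Nat.zero_le _)
    have h2 : |t|^k * ‖iteratedFDeriv ℝ m (ηf A) t‖ ≤ 9^k * (9 * (A 0 * B)) := by
      apply mul_le_mul
      · exact pow_le_pow_left₀ (abs_nonneg _) h1 k
      · exact hmain.trans (by gcongr)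
      · exact norm_nonneg _
      · positivity
    have h3 : (0:ℝ) ≤ 9 * B * (2^k * Ck) := by positivity
    nlinarith
  · set J := ⌈max (t-4) 0⌉₊ with hJ
    have hJt : (t - 4 : ℝ) ≤ J := le_trans (le_max_left _ _) (Nat.le_ceil _)
    have hJ1 : 1 ≤ J := by
      by_contra h
      have : J = 0 := by omega
      rw [this] at hJt
      norm_num at hJt
      linarith
    have hJ2 : t/2 ≤ (J:ℝ) := by linarith
    have ht0 : (0:ℝ) < t := by linarith
    have habs : |t| = t := abs_of_pos ht0
    have h3 : (t/2)^k ≤ (J:ℝ)^k := pow_le_pow_left₀ (by linarith) hJ2 k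
    have h4 : A J ≤ Ck / (t/2)^k :=
      (hCk J hJ1).trans (div_le_div_of_nonneg_left hCk0 (by positivity) h3)
    have h5 : |t|^k * ‖iteratedFDeriv ℝ m (ηf A) t‖ ≤ t^k * (9 * (Ck / (t/2)^k * B)) := by
      rw [habs]
      refine le_trans (mul_le_mul_of_nonneg_left hmain (by positivity)) ?_
      gcongr
    have h6 : t^k * (9 * (Ck / (t/2)^k * B)) = 9 * B * (2^k * Ck) := by
      rw [div_pow]
      field_simp
    rw [h6] at h5
    have h7 : (0:ℝ) ≤ 9 * B * (9^k * A 0) :=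
      mul_nonneg (mul_nonneg (by norm_num) hB0) (mul_nonneg (by positivity) (hA0 0))
    nlinarith
  
lemma ηf_nonneg (hA0 : ∀ j, 0 ≤ A j) (t : ℝ) : 0 ≤ ηf A t :=
  tsum_nonneg fun j => mul_nonneg (hA0 j) bmp.nonneg

lemma ηf_maj (hA0 : ∀ j, 0 ≤ A j) {t : ℝ} (ht : 0 ≤ t) : A ⌊t⌋₊ ≤ ηf A t := by
  have h1 : trm A ⌊t⌋₊ t = A ⌊t⌋₊ := by
    have hmem : t - ⌊t⌋₊ ∈ closedBall (0:ℝ) bmp.rIn := by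
      rw [mem_closedBall, Real.dist_eq, sub_zero]
      have h1 := Nat.floor_le ht
      have h2 := Nat.lt_floor_add_one t
      rw [abs_of_nonneg (by linarith)]
      show t - ⌊t⌋₊ ≤ (2:ℝ)
      linarith
    simp [trm, bmp.one_of_mem_closedBall hmem]
  rw [← h1]
  exact Summable.le_tsum (summable_trm A t) ⌊t⌋₊ fun j _ => mul_nonneg (hA0 j) bmp.nonneg

/-- The 1-dimensional Schwartz majorant. -/
def ηS (hA0 : ∀ j, 0 ≤ A j) (hAanti : Antitone A)
    (hAdec : ∀ k : ℕ, ∃ C : ℝ, 0 ≤ C ∧ ∀ j : ℕ, 1 ≤ j → A j ≤ C / (j:ℝ)^k) :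
    SchwartzMap ℝ ℝ where
  toFun := ηf A
  smooth' := ηf_contDiff A
  decay' := fun k m => by
    obtain ⟨C, hC⟩ := ηf_decay hA0 hAanti hAdec k m
    exact ⟨C, fun x => by simpa [Real.norm_eq_abs] using hC x⟩

section NormSq

variable {E : Type*} [NormedAddCommGroup E] [InnerProductSpace ℝ E]

lemma hasTemperateGrowth_norm_sq :
    Function.HasTemperateGrowth (fun x : E => ‖x‖^2) := by
  apply Function.HasTemperateGrowth.of_fderiv (k := 2) (C := 1)
  · have hfd : fderiv ℝ (fun x : E => ‖x‖^2) = ⇑((2:ℕ) • (innerSL ℝ : E →L[ℝ] E →L[ℝ] ℝ)) := by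
      funext x
      rw [(hasStrictFDerivAt_norm_sq x).hasFDerivAt.fderiv]
      simp
    rw [hfd]
    exact ((2:ℕ) • (innerSL ℝ : E →L[ℝ] E →L[ℝ] ℝ)).hasTemperateGrowth
  · exact fun x => (hasStrictFDerivAt_norm_sq x).hasFDerivAt.differentiableAt
  · intro x
    have : ‖(‖x‖^2 : ℝ)‖ = ‖x‖^2 := by
      rw [Real.norm_eq_abs, abs_of_nonneg (by positivity)]
    rw [this]
    nlinarith [norm_nonneg x]

end NormSq

end Stmt11

end Stmt11Aux

/-- Every real Schwartz function is the difference of two nonnegative Schwartz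
functions, the first of which majorizes `|φ|`. -/
theorem stmt11 (n : ℕ) (φ : SchwartzMap (EuclideanSpace ℝ (Fin n)) ℝ) :
    ∃ φ₁ φ₂ : SchwartzMap (EuclideanSpace ℝ (Fin n)) ℝ,
      (∀ x, 0 ≤ φ₁ x) ∧ (∀ x, 0 ≤ φ₂ x) ∧
      (∀ x, φ x = φ₁ x - φ₂ x) ∧ (∀ x, |φ x| ≤ φ₁ x) := by
  classical
  set E := EuclideanSpace ℝ (Fin n)
  -- global bound for |φ|
  obtain ⟨C₀, hC₀⟩ := φ.decay' 0 0
  have hφbd : ∀ z : E, |φ z| ≤ C₀ := by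
    intro z
    have := hC₀ z
    simp [norm_iteratedFDeriv_zero, Real.norm_eq_abs] at this; exact this
  -- the weights
  set A : ℕ → ℝ := fun j =>
    sSup ((fun z : E => |φ z|) '' {z : E | (j:ℝ) ≤ ‖z‖^2}) with hA
  have hA_le : ∀ (j : ℕ) (z : E), (j:ℝ) ≤ ‖z‖^2 → |φ z| ≤ A j := by
    intro j z hz
    apply le_csSup
    · exact ⟨C₀, by rintro y ⟨w, -, rfl⟩; exact hφbd w⟩
    · exact ⟨z, hz, rfl⟩
  have hA0 : ∀ j, 0 ≤ A j := by
    intro j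
    apply Real.sSup_nonneg
    rintro y ⟨w, -, rfl⟩
    exact abs_nonneg _
  have hAanti : Antitone A := by
    intro i j hij
    apply Real.sSup_le
    · rintro y ⟨w, hw, rfl⟩
      exact hA_le i w (le_trans (by exact_mod_cast Nat.cast_le.2 hij) hw)
    · exact hA0 i
  have hAdec : ∀ k : ℕ, ∃ C : ℝ, 0 ≤ C ∧ ∀ j : ℕ, 1 ≤ j → A j ≤ C / (j:ℝ)^k := by
    intro k
    obtain ⟨C, hC⟩ := φ.decay' (2*k) 0
    have hC' : ∀ z : E, ‖z‖^(2*k) * |φ z| ≤ C := by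
      intro z
      have := hC z
      simp [norm_iteratedFDeriv_zero, Real.norm_eq_abs] at this; exact this
    have hC0 : 0 ≤ C := le_trans (by positivity) (hC' 0)
    refine ⟨C, hC0, fun j hj => ?_⟩
    have hjpos : (0:ℝ) < (j:ℝ)^k := by
      have : (1:ℝ) ≤ (j:ℝ) := by exact_mod_cast hj
      positivity
    apply Real.sSup_le
    · rintro y ⟨w, hw, rfl⟩
      rw [le_div_iff₀ hjpos]
      calc |φ w| * (j:ℝ)^k ≤ |φ w| * (‖w‖^2)^k := by
            apply mul_le_mul_of_nonneg_left _ (abs_nonneg _)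
            exact pow_le_pow_left₀ (Nat.cast_nonneg j) hw k
        _ = ‖w‖^(2*k) * |φ w| := by rw [← pow_mul]; ring
        _ ≤ C := hC' w
    · positivity
  -- the 1-dimensional Schwartz majorant
  set η : SchwartzMap ℝ ℝ := Stmt11.ηS hA0 hAanti hAdec with hη
  -- compose with the squared norm
  have hupper : ∃ (k : ℕ) (C : ℝ), ∀ x : E, ‖x‖ ≤ C * (1 + ‖(fun x : E => ‖x‖^2) x‖) ^ k := by
    refine ⟨1, 1, fun x => ?_⟩
    have h1 : ‖(‖x‖^2 : ℝ)‖ = ‖x‖^2 := by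
      rw [Real.norm_eq_abs, abs_of_nonneg (by positivity)]
    rw [h1, pow_one]
    nlinarith [norm_nonneg x, sq_nonneg (‖x‖ - 1)]
  set φ₁ : SchwartzMap E ℝ :=
    SchwartzMap.compCLM (𝕜 := ℝ) Stmt11.hasTemperateGrowth_norm_sq hupper η with hφ₁
  have hφ₁x : ∀ x : E, φ₁ x = Stmt11.ηf A (‖x‖^2) := fun x => rfl
  have hφ₁nonneg : ∀ x : E, 0 ≤ φ₁ x := by
    intro x
    rw [hφ₁x]
    exact tsum_nonneg fun j => mul_nonneg (hA0 j) Stmt11.bmp.nonneg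
  have hφ₁maj : ∀ x : E, |φ x| ≤ φ₁ x := by
    intro x
    rw [hφ₁x]
    have ht : (0:ℝ) ≤ ‖x‖^2 := by positivity
    refine le_trans (hA_le ⌊‖x‖^2⌋₊ x (Nat.floor_le ht)) ?_
    exact Stmt11.ηf_maj hA0 ht
  refine ⟨φ₁, φ₁ - φ, hφ₁nonneg, ?_, ?_, hφ₁maj⟩
  · intro x
    rw [SchwartzMap.sub_apply]
    have := hφ₁maj x
    have h2 := abs_le.1 this
    linarith [h2.2]
  · intro x
    rw [SchwartzMap.sub_apply]
    ring
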